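/- Semigroup property of the nominal trajectory: for a_lo > 0, v ≤ v_lo, and τ, t ≥ 0, the nominal altitude function satisfies h_n(τ + t; v) = h_n(τ; v) + h_n(t; v_τ) where v_τ = min(v + a_lo·τ, v_lo) is the nominal velocity at time τ. -/

import Mathlib

/-!
Write `T u = (v_lo - u) / a_lo` for the time the nominal velocity needs to reach `v_lo` from `u`.
Both branches of `h_n` are the single closed form
`h_n(s; u) = v_lo s - (a_lo / 2) T(u)² + (a_lo / 2) (T(u) - s)₊²`,
and the velocity reached after time `τ` has `T(v_τ) = (T(v) - τ)₊`. Since `((x)₊ - t)₊ = (x - t)₊`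
for `t ≥ 0`, the semigroup identity becomes a polynomial identity in `T(v)`, `(T(v) - τ)₊` and
`(T(v) - τ - t)₊`.
-/

noncomputable def nominalAltitude (a vmax s u : ℝ) : ℝ :=
  if s ≤ (vmax - u) / a then a / 2 * s ^ 2 + u * s else vmax * s - (vmax - u) ^ 2 / (2 * a)

lemma max_sub_max_zero {x t : ℝ} (ht : 0 ≤ t) : max (max x 0 - t) 0 = max (x - t) 0 := by
  rcases le_total x 0 with hx | hx
  · rw [max_eq_right hx, max_eq_right (by linarith), max_eq_right (by linarith)]
  · rw [max_eq_left hx]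

section
variable {a vmax : ℝ}

lemma nominalAltitude_eq (ha : 0 < a) (s u : ℝ) :
    nominalAltitude a vmax s u =
      vmax * s - a / 2 * ((vmax - u) / a) ^ 2 + a / 2 * max ((vmax - u) / a - s) 0 ^ 2 := by
  unfold nominalAltitude
  split_ifs with h
  · rw [max_eq_left (sub_nonneg.2 h)]
    field_simp
    ring
  · rw [max_eq_right (by linarith)]
    field_simp
    ring

lemma sub_min_add_mul_div (ha : 0 < a) (u τ : ℝ) :
    (vmax - min (u + a * τ) vmax) / a = max ((vmax - u) / a - τ) 0 := by
  rcases le_total (u + a * τ) vmax with h | h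
  · rw [min_eq_left h, max_eq_left]
    · field_simp
      ring
    · rw [sub_nonneg, le_div_iff₀ ha]
      linarith
  · rw [min_eq_right h, max_eq_right, sub_self, zero_div]
    rw [sub_nonpos, div_le_iff₀ ha]
    linarith

theorem nominalAltitude_add (ha : 0 < a) {t : ℝ} (ht : 0 ≤ t) (τ u : ℝ) :
    nominalAltitude a vmax (τ + t) u =
      nominalAltitude a vmax τ u + nominalAltitude a vmax t (min (u + a * τ) vmax) := by
  simp only [nominalAltitude_eq ha, sub_min_add_mul_div ha, max_sub_max_zero ht, ← sub_sub]
  ring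

end

theorem stmt15_general (a_lo v v_lo τ t : ℝ) (ha : 0 < a_lo)
    (ht : 0 ≤ t)
    (hn : ℝ → ℝ → ℝ)
    (hndef : ∀ s u, hn s u = if s ≤ (v_lo - u) / a_lo then a_lo / 2 * s ^ 2 + u * s
                             else v_lo * s - (v_lo - u) ^ 2 / (2 * a_lo)) :
    hn (τ + t) v = hn τ v + hn t (min (v + a_lo * τ) v_lo) := by
  obtain rfl : hn = nominalAltitude a_lo v_lo := funext₂ hndef
  exact nominalAltitude_add ha ht τ v

theorem stmt15 (a_lo v v_lo τ t : ℝ) (ha : 0 < a_lo) (hv : v ≤ v_lo)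
    (hτ : 0 ≤ τ) (ht : 0 ≤ t)
    (hn : ℝ → ℝ → ℝ)
    (hndef : ∀ s u, hn s u = if s ≤ (v_lo - u) / a_lo then a_lo / 2 * s ^ 2 + u * s
                             else v_lo * s - (v_lo - u) ^ 2 / (2 * a_lo)) :
    hn (τ + t) v = hn τ v + hn t (min (v + a_lo * τ) v_lo) :=
  stmt15_general a_lo v v_lo τ t ha ht hn hndef
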